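/- If U ⊆ λ(Φ) is an irreducible hitting set of the collection coLMNS(Φ) of all co-LMNSes of Φ, then U is an LMES of Φ. (Assume λ(Φ) ≠ ∅, and if Φ has unlabelled clauses then at least one label of Φ is irredundant.) -/

import Mathlib

/-! The co-LMNSes are exactly the minimal sets of labels whose removal breaks equivalence, so
a set of labels `S ⊆ λ(Φ)` hits all of them iff `Φ|_S ≡ Φ`: if `S` misses the co-LMNS `M`, then
`S` lies inside the LMNS `λ(Φ) \ M`, and if `Φ|_S ≢ Φ`, then `S` extends to an LMNS whose
complement misses `S`. Irreducible hitting sets are therefore minimal equivalent subsets. -/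

namespace LCNFStmt

/-- A clause is a finite set of literals (variable, polarity). -/
abbrev Clause (V : Type) := Finset (V × Bool)

def ClauseSat {V : Type} (τ : V → Bool) (c : Clause V) : Prop :=
  ∃ p ∈ c, τ p.1 = p.2

/-- τ is a model of a CNF formula (finite set of clauses). -/
def Sat {V : Type} (τ : V → Bool) (F : Finset (Clause V)) : Prop :=
  ∀ c ∈ F, ClauseSat τ c

/-- Logical equivalence of CNF formulas: same models. -/
def Equiv {V : Type} (F₁ F₂ : Finset (Clause V)) : Prop :=
  ∀ τ, Sat τ F₁ ↔ Sat τ F₂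

/-- F₁ implies F₂: every model of F₁ is a model of F₂. -/
def Implies {V : Type} (F₁ F₂ : Finset (Clause V)) : Prop :=
  ∀ τ, Sat τ F₁ → Sat τ F₂

/-- A labelled CNF formula: a CNF formula together with a labelling function. -/
structure LCNF (V L : Type) where
  F : Finset (Clause V)
  lab : Clause V → Finset L

variable {V L : Type} [DecidableEq V] [DecidableEq L]

/-- The set of active labels λ(Φ). -/
def LCNF.active (Φ : LCNF V L) : Finset L := Φ.F.biUnion Φ.lab

/-- Clause set of the induced subformula Φ|_S : clauses all of whose labels lie in S. -/
def LCNF.restrict (Φ : LCNF V L) (S : Finset L) : Finset (Clause V) :=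
  Φ.F.filter (fun c => Φ.lab c ⊆ S)

/-- Φ|_S ≡ Φ. -/
def LCNF.EquivTo (Φ : LCNF V L) (S : Finset L) : Prop :=
  Equiv (Φ.restrict S) Φ.F

/-- A label is redundant in Φ if removing it keeps the formula equivalent. -/
def LCNF.Redundant (Φ : LCNF V L) (l : L) : Prop :=
  Φ.EquivTo (Φ.active.erase l)

/-- Labelled minimal equivalent subset. -/
def LCNF.LMES (Φ : LCNF V L) (S : Finset L) : Prop :=
  S ⊆ Φ.active ∧ Φ.EquivTo S ∧ ∀ S' ⊂ S, ¬ Φ.EquivTo S'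

/-- Labelled maximal non-equivalent subset. -/
def LCNF.LMNS (Φ : LCNF V L) (S : Finset L) : Prop :=
  S ⊆ Φ.active ∧ ¬ Φ.EquivTo S ∧ ∀ S', S ⊂ S' → S' ⊆ Φ.active → Φ.EquivTo S'

/-- Labelled maximal satisfiable subset. -/
def LCNF.LMSS (Φ : LCNF V L) (S : Finset L) : Prop :=
  S ⊆ Φ.active ∧ (∃ τ, Sat τ (Φ.restrict S)) ∧
    ∀ S', S ⊂ S' → S' ⊆ Φ.active → ¬ ∃ τ, Sat τ (Φ.restrict S')

/-- Hitting set of a collection of finite sets. -/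
def HittingSet {α : Type} [DecidableEq α] (𝒮 : Set (Finset α)) (H : Finset α) : Prop :=
  ∀ A ∈ 𝒮, (H ∩ A).Nonempty

/-- Irreducible hitting set. -/
def IrredHittingSet {α : Type} [DecidableEq α] (𝒮 : Set (Finset α)) (H : Finset α) : Prop :=
  HittingSet 𝒮 H ∧ ∀ H' ⊂ H, ¬ HittingSet 𝒮 H'

end LCNFStmt

namespace LCNFStmt.LCNF

variable {V L : Type} [DecidableEq L]

def coLMNS (Φ : LCNF V L) : Set (Finset L) :=
  {M | M ⊆ Φ.active ∧ Φ.LMNS (Φ.active \ M)}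

lemma restrict_mono (Φ : LCNF V L) {S T : Finset L} (h : S ⊆ T) :
    Φ.restrict S ⊆ Φ.restrict T := by
  intro c hc
  rw [LCNF.restrict, Finset.mem_filter] at hc ⊢
  exact ⟨hc.1, hc.2.trans h⟩

lemma EquivTo.mono {Φ : LCNF V L} {S T : Finset L} (hS : Φ.EquivTo S) (h : S ⊆ T) :
    Φ.EquivTo T := fun τ =>
  ⟨fun hT => (hS τ).1 fun c hc => hT c (Φ.restrict_mono h hc),
    fun hF c hc => hF c (Finset.filter_subset _ _ hc)⟩

lemma equivTo_active (Φ : LCNF V L) : Φ.EquivTo Φ.active := fun _ =>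
  ⟨fun h c hc => h c (Finset.mem_filter.mpr ⟨hc, Finset.subset_biUnion_of_mem Φ.lab hc⟩),
    fun h c hc => h c (Finset.mem_filter.mp hc).1⟩

lemma exists_superset_LMNS {Φ : LCNF V L} {S : Finset L} (hS : S ⊆ Φ.active)
    (hne : ¬ Φ.EquivTo S) : ∃ T, S ⊆ T ∧ Φ.LMNS T := by
  have hfin : {T : Finset L | T ⊆ Φ.active ∧ ¬ Φ.EquivTo T}.Finite :=
    Φ.active.powerset.finite_toSet.subset fun T hT => Finset.mem_powerset.mpr hT.1
  obtain ⟨T, hST, ⟨hT, hTne⟩, hmax⟩ := hfin.exists_le_maximal ⟨hS, hne⟩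
  refine ⟨T, hST, hT, hTne, fun S' hTS' hS' => ?_⟩
  by_contra hS'ne
  exact hTS'.not_subset (hmax ⟨hS', hS'ne⟩ hTS'.subset)

lemma hittingSet_coLMNS_iff {Φ : LCNF V L} {S : Finset L} (hS : S ⊆ Φ.active) :
    HittingSet Φ.coLMNS S ↔ Φ.EquivTo S := by
  constructor
  · intro hhit
    by_contra hne
    obtain ⟨T, hST, hT, hTne, hTmax⟩ := exists_superset_LMNS hS hne
    have hM : Φ.active \ T ∈ Φ.coLMNS := by
      refine ⟨Finset.sdiff_subset, ?_⟩
      rw [Finset.sdiff_sdiff_eq_self hT]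
      exact ⟨hT, hTne, hTmax⟩
    obtain ⟨x, hx⟩ := hhit _ hM
    rw [Finset.mem_inter, Finset.mem_sdiff] at hx
    exact hx.2.2 (hST hx.1)
  · intro hequiv M ⟨_, hLMNS⟩
    rw [Finset.nonempty_iff_ne_empty, Ne, ← Finset.disjoint_iff_inter_eq_empty]
    intro hdisj
    exact hLMNS.2.1 (hequiv.mono (Finset.subset_sdiff.mpr ⟨hS, hdisj⟩))

end LCNFStmt.LCNF

namespace LCNFStmt

theorem irred_hs_of_colmns_is_lmes_general {V L : Type} [DecidableEq L]
    (Φ : LCNF V L)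
    (U : Finset L) (hU : U ⊆ Φ.active)
    (hhs : IrredHittingSet {M | M ⊆ Φ.active ∧ Φ.LMNS (Φ.active \ M)} U) :
    Φ.LMES U := by
  obtain ⟨hhit, hirr⟩ := hhs
  refine ⟨hU, (LCNF.hittingSet_coLMNS_iff hU).mp hhit, fun S hSU hS => ?_⟩
  exact hirr S hSU ((LCNF.hittingSet_coLMNS_iff (hSU.subset.trans hU)).mpr hS)

theorem irred_hs_of_colmns_is_lmes {V L : Type} [DecidableEq V] [DecidableEq L]
    (Φ : LCNF V L) (hne : Φ.active.Nonempty)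
    (hunlab : (∃ c ∈ Φ.F, Φ.lab c = ∅) → ∃ l ∈ Φ.active, ¬ Φ.Redundant l)
    (U : Finset L) (hU : U ⊆ Φ.active)
    (hhs : IrredHittingSet {M | M ⊆ Φ.active ∧ Φ.LMNS (Φ.active \ M)} U) :
    Φ.LMES U :=
  irred_hs_of_colmns_is_lmes_general Φ U hU hhs

end LCNFStmt
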